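/- Let a : ℝ → ℝ be continuous, 1-periodic, and strictly positive. Then ⟨a⁻¹·[[[[a]]]]⟩ = ⟨a·[[[[a⁻¹]]]]⟩, and both are equal to −⟨[[a]]·[[a⁻¹]]⟩. (This is the symmetry of the homogenization coefficient C₂.) -/

import Mathlib

open MeasureTheory Matrix

/-- The mean of a function over one period: `⟨b⟩ = ∫₀¹ b(y) dy`. -/
noncomputable def pmean (b : ℝ → ℝ) : ℝ := ∫ y in (0:ℝ)..1, b y

/-- The fluctuating (mean-zero) part: `{b} = b − ⟨b⟩`. -/
noncomputable def pfluct (b : ℝ → ℝ) : ℝ → ℝ := fun y => b y - pmean b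

/-- The mean-zero primitive of the fluctuating part:
`[[b]](y) = ∫₀^y {b}(ξ) dξ − ∫₀¹ (∫₀^s {b}(ξ) dξ) ds`. -/
noncomputable def pbracket (b : ℝ → ℝ) : ℝ → ℝ :=
  fun y => (∫ ξ in (0:ℝ)..y, pfluct b ξ) - ∫ s in (0:ℝ)..1, (∫ ξ in (0:ℝ)..s, pfluct b ξ)

/-! One integration by parts over a period gives `⟨g·[[h]]⟩ = ⟨{g}·[[h]]⟩ = −⟨[[g]]·{h}⟩`,
the boundary term vanishing because `[[g]]` and `[[h]]` take the same value at `0` and `1`.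
Applied with `h = [[f]]`, for which `{[[f]]} = [[f]]`, this gives
`⟨g·[[[[f]]]]⟩ = −⟨[[f]]·[[g]]⟩`, which is symmetric in `f` and `g`. -/

section

variable {b f g h u : ℝ → ℝ}

lemma Continuous.pfluct (hb : Continuous b) : Continuous (pfluct b) :=
  hb.sub continuous_const

lemma hasDerivAt_pbracket (hb : Continuous b) (y : ℝ) :
    HasDerivAt (pbracket b) (pfluct b y) y :=
  ((hb.pfluct.integral_hasStrictDerivAt 0 y).hasDerivAt).sub_const _

lemma Continuous.pbracket (hb : Continuous b) : Continuous (pbracket b) :=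
  continuous_iff_continuousAt.2 fun y => (hasDerivAt_pbracket hb y).continuousAt

lemma pmean_pfluct (hb : Continuous b) : pmean (pfluct b) = 0 := by
  simp [pmean, pfluct, intervalIntegral.integral_sub (hb.intervalIntegrable 0 1)
    intervalIntegrable_const]

lemma pbracket_one (hb : Continuous b) : pbracket b 1 = pbracket b 0 := by
  have hmean := pmean_pfluct hb
  rw [pmean] at hmean
  simp [pbracket, hmean]

lemma pmean_pbracket (hb : Continuous b) : pmean (pbracket b) = 0 := by
  have hprim : Continuous fun y => ∫ ξ in (0:ℝ)..y, pfluct b ξ :=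
    continuous_iff_continuousAt.2 fun y =>
      (hb.pfluct.integral_hasStrictDerivAt 0 y).hasDerivAt.continuousAt
  simp [pmean, pbracket, intervalIntegral.integral_sub (hprim.intervalIntegrable 0 1)
    intervalIntegrable_const]

lemma pfluct_pbracket (hb : Continuous b) : pfluct (pbracket b) = pbracket b := by
  funext y
  simp [pfluct, pmean_pbracket hb]

lemma pmean_pfluct_mul (hg : Continuous g) (hu : Continuous u) (hu0 : pmean u = 0) :
    pmean (fun y => pfluct g y * u y) = pmean (fun y => g y * u y) := by
  have hexpand : (fun y => pfluct g y * u y) = fun y => g y * u y - pmean g * u y := by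
    funext y
    simp only [pfluct]
    ring
  have hgu : IntervalIntegrable (fun y => g y * u y) volume 0 1 :=
    (hg.mul hu).intervalIntegrable 0 1
  have hcu : IntervalIntegrable (fun y => pmean g * u y) volume 0 1 :=
    (continuous_const.mul hu).intervalIntegrable 0 1
  rw [pmean, hexpand, intervalIntegral.integral_sub hgu hcu, intervalIntegral.integral_const_mul,
    ← pmean, ← pmean, hu0, mul_zero, sub_zero]

lemma pmean_mul_pbracket (hg : Continuous g) (hh : Continuous h) :
    pmean (fun y => g y * pbracket h y) = - pmean (fun y => pbracket g y * pfluct h y) := by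
  have ibp := intervalIntegral.integral_mul_deriv_eq_deriv_mul
    (fun x _ => hasDerivAt_pbracket hh x) (fun x _ => hasDerivAt_pbracket hg x)
    (hh.pfluct.intervalIntegrable 0 1) (hg.pfluct.intervalIntegrable 0 1)
  rw [pbracket_one hh, pbracket_one hg, sub_self, zero_sub] at ibp
  calc pmean (fun y => g y * pbracket h y)
      = pmean (fun y => pfluct g y * pbracket h y) :=
        (pmean_pfluct_mul hg hh.pbracket (pmean_pbracket hh)).symm
    _ = - pmean (fun y => pbracket g y * pfluct h y) := by
        simp only [pmean, mul_comm (pfluct g _), mul_comm (pbracket g _), ibp]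

lemma pmean_mul_pbracket_pbracket (hf : Continuous f) (hg : Continuous g) :
    pmean (fun y => g y * pbracket (pbracket f) y)
      = - pmean (fun y => pbracket f y * pbracket g y) := by
  rw [pmean_mul_pbracket hg hf.pbracket, pfluct_pbracket hf]
  simp only [mul_comm (pbracket g _)]

end

theorem statement13_general (a : ℝ → ℝ) (ha : Continuous a)
    (hpos : ∀ y, 0 < a y) :
    pmean (fun y => (a y)⁻¹ * pbracket (pbracket a) y)
      = pmean (fun y => a y * pbracket (pbracket (fun z => (a z)⁻¹)) y) ∧
    pmean (fun y => (a y)⁻¹ * pbracket (pbracket a) y)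
      = - pmean (fun y => pbracket a y * pbracket (fun z => (a z)⁻¹) y) := by
  have hinv : Continuous fun z => (a z)⁻¹ := ha.inv₀ fun y => (hpos y).ne'
  rw [pmean_mul_pbracket_pbracket ha hinv, pmean_mul_pbracket_pbracket hinv ha]
  simp only [mul_comm (pbracket (fun z => (a z)⁻¹) _), and_self]

/-- For `a` continuous, 1-periodic and strictly positive,
`⟨a⁻¹·[[[[a]]]]⟩ = ⟨a·[[[[a⁻¹]]]]⟩` and both equal `−⟨[[a]]·[[a⁻¹]]⟩`
(the symmetry of the homogenization coefficient `C₂`). -/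
theorem statement13 (a : ℝ → ℝ) (ha : Continuous a) (hper : Function.Periodic a 1)
    (hpos : ∀ y, 0 < a y) :
    pmean (fun y => (a y)⁻¹ * pbracket (pbracket a) y)
      = pmean (fun y => a y * pbracket (pbracket (fun z => (a z)⁻¹)) y) ∧
    pmean (fun y => (a y)⁻¹ * pbracket (pbracket a) y)
      = - pmean (fun y => pbracket a y * pbracket (fun z => (a z)⁻¹) y) :=
  statement13_general a ha hpos
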